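/- For every real q>1, every n≥1 and every x∈[0,∞): M_{n,q}(t^3;x)=x^3 + (2+q)x^2/[n]_q + x/[n]_q^2, and M_{n,q}(t^4;x)=x^4 + (3+2q+q^2)x^3/[n]_q + (3+3q+q^2)x^2/[n]_q^2 + x/[n]_q^3. -/

import Mathlib

open scoped BigOperators

/-- The `q`-integer `[k]_q = (q^k - 1)/(q - 1)`. -/
noncomputable def qNat (q : ℝ) (k : ℕ) : ℝ := (q ^ k - 1) / (q - 1)

/-- The `q`-factorial `[k]_q! = [1]_q [2]_q ⋯ [k]_q`, with `[0]_q! = 1`. -/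
noncomputable def qFactorial (q : ℝ) : ℕ → ℝ
  | 0 => 1
  | k + 1 => qFactorial q k * qNat q (k + 1)

/-- The `q`-exponential function `e_q(z) = ∑_{k=0}^∞ z^k/[k]_q!`. -/
noncomputable def qExp (q z : ℝ) : ℝ := ∑' k : ℕ, z ^ k / qFactorial q k

/-- The `q`-Szász basis function
`s_{n,k}(q;x) = q^{-k(k-1)/2} ([n]_q^k x^k/[k]_q!) e_q(-[n]_q q^{-k} x)`. -/
noncomputable def qSzaszBasis (q : ℝ) (n k : ℕ) (x : ℝ) : ℝ :=
  (q ^ (k * (k - 1) / 2))⁻¹ * (qNat q n ^ k * x ^ k / qFactorial q k) *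
    qExp q (-(qNat q n) * q ^ (-(k : ℤ)) * x)

/-- The `q`-Szász operator `M_{n,q}(f;x) = ∑_{k=0}^∞ f([k]_q/[n]_q) s_{n,k}(q;x)`. -/
noncomputable def qSzasz (q : ℝ) (n : ℕ) (f : ℝ → ℝ) (x : ℝ) : ℝ :=
  ∑' k : ℕ, f (qNat q k / qNat q n) * qSzaszBasis q n k x

/-- The weight `w_0(x) = 1`, `w_p(x) = (1 + x^p)⁻¹` for `p ≥ 1`. -/
noncomputable def weight (p : ℕ) (x : ℝ) : ℝ := if p = 0 then 1 else (1 + x ^ p)⁻¹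

/-- The weighted sup-norm `‖f‖_p = sup_{x ≥ 0} w_p(x)|f(x)|`. -/
noncomputable def wnorm (p : ℕ) (f : ℝ → ℝ) : ℝ :=
  ⨆ x : Set.Ici (0 : ℝ), weight p x.1 * |f x.1|

/-- Membership in the space `C_p`: `f` is continuous on `[0,∞)` and `w_p f` is
uniformly continuous and bounded on `[0,∞)`. -/
def MemCp (p : ℕ) (f : ℝ → ℝ) : Prop :=
  ContinuousOn f (Set.Ici 0) ∧
  UniformContinuousOn (fun x => weight p x * f x) (Set.Ici 0) ∧
  ∃ M : ℝ, ∀ x ∈ Set.Ici (0 : ℝ), |weight p x * f x| ≤ M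

/-- The second difference `Δ_h² f(x) = f(x+2h) - 2f(x+h) + f(x)`. -/
noncomputable def delta2 (f : ℝ → ℝ) (h x : ℝ) : ℝ := f (x + 2 * h) - 2 * f (x + h) + f x

/-- The second modulus of smoothness `ω_p²(f;δ) = sup_{0<h≤δ} ‖Δ_h² f‖_p`. -/
noncomputable def omega2 (p : ℕ) (f : ℝ → ℝ) (δ : ℝ) : ℝ :=
  ⨆ h : {h : ℝ // 0 < h ∧ h ≤ δ}, wnorm p (fun x => delta2 f h.1 x)

/-- The (first) modulus of continuity on `[0,∞)`:
`ω(g;δ) = sup {|g(s)-g(t)| : s,t ≥ 0, |s-t| ≤ δ}`. -/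
noncomputable def omega1 (g : ℝ → ℝ) (δ : ℝ) : ℝ :=
  sSup {d : ℝ | ∃ s t : ℝ, 0 ≤ s ∧ 0 ≤ t ∧ |s - t| ≤ δ ∧ d = |g s - g t|}

/-- The `q`-derivative `(D_q g)(x) = (g(qx) - g(x))/((q-1)x)`. -/
noncomputable def qDeriv (q : ℝ) (g : ℝ → ℝ) (x : ℝ) : ℝ := (g (q * x) - g x) / ((q - 1) * x)

/-- The `q`-Stirling-type numbers: `S_q(0,0)=1`, `S_q(m,0)=0` for `m>0`,
`S_q(m,j)=0` for `m<j`, and `S_q(m+1,j)=[j]_q S_q(m,j) + S_q(m,j-1)`. -/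
noncomputable def qStirling (q : ℝ) : ℕ → ℕ → ℝ
  | 0, 0 => 1
  | 0, _ + 1 => 0
  | _ + 1, 0 => 0
  | m + 1, j + 1 => qNat q (j + 1) * qStirling q m (j + 1) + qStirling q m j

/-! With `b = [n]_q x` the basis functions become
`s_k(b) = q^(-k(k-1)/2) b^k/[k]_q! e_q(-b q^(-k))`, and
`[n]_q^m M_{n,q}(t^m; x) = T_m(b) := ∑_k [k]_q^m s_k(b)`. Expanding each `e_q` turns
`∑_k s_k(b)` into a double series whose antidiagonal sums are `(-b)^N D_N` with
`[N+1]_q D_{N+1} = (1 - q^(-N)) D_N`; hence `D_N = 0` for `N ≥ 1` and the weights sum to `1`.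
The shift `[k+1]_q s_{k+1}(b) = b s_k(b/q)` and `[k+1]_q = 1 + q [k]_q` give the recursion
`T_{m+1}(b) = b ∑_{i ≤ m} (m choose i) q^i T_i(b/q)`, from which `T_3` and `T_4` are
read off. -/

open Finset Filter Topology

section QInteger

variable {q : ℝ}

@[simp]
lemma qNat_zero : qNat q 0 = 0 := by simp [qNat]

lemma qNat_add (hq : q ≠ 1) (k j : ℕ) : qNat q (k + j) = qNat q k + q ^ k * qNat q j := by
  have : q - 1 ≠ 0 := sub_ne_zero.mpr hq
  unfold qNat
  field_simp
  ring

lemma qNat_succ (hq : q ≠ 1) (k : ℕ) : qNat q (k + 1) = 1 + q * qNat q k := by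
  rw [add_comm, qNat_add hq, pow_one, qNat, pow_one, div_self (sub_ne_zero.mpr hq)]

lemma qNat_pos (hq : 1 < q) {k : ℕ} (hk : k ≠ 0) : 0 < qNat q k :=
  div_pos (sub_pos.mpr (one_lt_pow₀ hq hk)) (sub_pos.mpr hq)

lemma qNat_nonneg (hq : 1 < q) (k : ℕ) : 0 ≤ qNat q k := by
  rcases eq_or_ne k 0 with rfl | hk
  · simp
  · exact (qNat_pos hq hk).le

lemma qNat_le_pow_div (hq : 1 < q) (k : ℕ) : qNat q k ≤ q ^ k / (q - 1) :=
  div_le_div_of_nonneg_right (sub_le_self _ zero_le_one) (sub_pos.mpr hq).le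

lemma tendsto_qNat_atTop (hq : 1 < q) : Tendsto (qNat q) atTop atTop :=
  ((tendsto_atTop_add_const_right _ (-1) (tendsto_pow_atTop_atTop_of_one_lt hq)).atTop_div_const
    (sub_pos.mpr hq)).congr fun k => by simp only [qNat, sub_eq_add_neg]

lemma qFactorial_succ (q : ℝ) (k : ℕ) :
    qFactorial q (k + 1) = qFactorial q k * qNat q (k + 1) := rfl

lemma qFactorial_pos (hq : 1 < q) (k : ℕ) : 0 < qFactorial q k := by
  induction k with
  | zero => exact one_pos
  | succ k ih => exact mul_pos ih (qNat_pos hq k.succ_ne_zero)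

end QInteger

section QExponential

variable {q : ℝ}

lemma summable_qExp_terms (hq : 1 < q) (z : ℝ) : Summable fun k => z ^ k / qFactorial q k := by
  refine summable_of_ratio_norm_eventually_le (r := 1 / 2) (by norm_num) ?_
  filter_upwards [((tendsto_qNat_atTop hq).comp (tendsto_add_atTop_nat 1)).eventually_ge_atTop
    (2 * |z|)] with k (hk : 2 * |z| ≤ qNat q (k + 1))
  have hk₀ : 0 < qNat q (k + 1) := qNat_pos hq k.succ_ne_zero
  rw [qFactorial_succ, pow_succ, mul_div_mul_comm, norm_mul, mul_comm, norm_div,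
    Real.norm_of_nonneg hk₀.le]
  refine mul_le_mul_of_nonneg_right ?_ (norm_nonneg _)
  rw [div_le_iff₀ hk₀, Real.norm_eq_abs]
  linarith

lemma abs_qExp_le (hq : 1 < q) {z c : ℝ} (hz : |z| ≤ c) : |qExp q z| ≤ qExp q c := by
  have hnorm := (summable_qExp_terms hq z).norm
  refine (norm_tsum_le_tsum_norm hnorm).trans
    (hnorm.tsum_le_tsum (fun k => ?_) (summable_qExp_terms hq c))
  rw [norm_div, norm_pow, Real.norm_of_nonneg (qFactorial_pos hq k).le]
  gcongr
  · exact (qFactorial_pos hq k).le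
  · exact hz

end QExponential

noncomputable def qPoissonWeight (q : ℝ) (k : ℕ) (b : ℝ) : ℝ :=
  (q ^ (k * (k - 1) / 2))⁻¹ * (b ^ k / qFactorial q k) * qExp q (-b * q ^ (-(k : ℤ)))

lemma qSzaszBasis_eq_qPoissonWeight (q : ℝ) (n k : ℕ) (x : ℝ) :
    qSzaszBasis q n k x = qPoissonWeight q k (qNat q n * x) := by
  rw [qSzaszBasis, qPoissonWeight, mul_pow, neg_mul, neg_mul, neg_mul, mul_right_comm (qNat q n)]

section QPoissonWeight

variable {q : ℝ}

lemma abs_qPoissonWeight_le (hq : 1 < q) (k : ℕ) (b : ℝ) :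
    |qPoissonWeight q k b| ≤ qExp q |b| * (|b| ^ k / qFactorial q k) := by
  have hq₀ : 0 < q := one_pos.trans hq
  have hfac := qFactorial_pos hq k
  have hexp : |qExp q (-b * q ^ (-(k : ℤ)))| ≤ qExp q |b| := by
    refine abs_qExp_le hq ?_
    rw [abs_mul, abs_neg, abs_of_pos (zpow_pos hq₀ _)]
    exact mul_le_of_le_one_right (abs_nonneg b)
      (zpow_le_one_of_nonpos₀ hq.le (by simp))
  have hcoef : |(q ^ (k * (k - 1) / 2))⁻¹ * (b ^ k / qFactorial q k)|
      ≤ |b| ^ k / qFactorial q k := by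
    rw [abs_mul, abs_div, abs_pow, abs_of_pos hfac, abs_inv, abs_of_pos (pow_pos hq₀ _)]
    exact mul_le_of_le_one_left (by positivity) (inv_le_one_of_one_le₀ (one_le_pow₀ hq.le))
  rw [qPoissonWeight, abs_mul, mul_comm (qExp q |b|)]
  exact mul_le_mul hcoef hexp (abs_nonneg _) (by positivity)

lemma summable_mul_qPoissonWeight (hq : 1 < q) {φ : ℕ → ℝ} {C c : ℝ}
    (hφ : ∀ k, |φ k| ≤ C * c ^ k) (b : ℝ) :
    Summable fun k => φ k * qPoissonWeight q k b := by
  refine .of_norm_bounded ((summable_qExp_terms hq (c * |b|)).mul_left (C * qExp q |b|))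
    fun k => ?_
  rw [Real.norm_eq_abs, abs_mul]
  calc |φ k| * |qPoissonWeight q k b|
      ≤ C * c ^ k * (qExp q |b| * (|b| ^ k / qFactorial q k)) :=
        mul_le_mul (hφ k) (abs_qPoissonWeight_le hq k b) (abs_nonneg _)
          ((abs_nonneg _).trans (hφ k))
    _ = C * qExp q |b| * ((c * |b|) ^ k / qFactorial q k) := by ring

lemma qNat_succ_mul_qPoissonWeight_succ (hq : 1 < q) (k : ℕ) (b : ℝ) :
    qNat q (k + 1) * qPoissonWeight q (k + 1) b = b * qPoissonWeight q k (b / q) := by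
  have hq₀ : q ≠ 0 := (one_pos.trans hq).ne'
  have hfac := (qFactorial_pos hq k).ne'
  have hnat := (qNat_pos hq k.succ_ne_zero).ne'
  have harg : -b * q ^ (-((k + 1 : ℕ) : ℤ)) = -(b / q) * q ^ (-(k : ℤ)) := by
    rw [zpow_neg, zpow_neg, zpow_natCast, zpow_natCast, pow_succ]
    field_simp
  rw [qPoissonWeight, qPoissonWeight, harg, Nat.triangle_succ, qFactorial_succ, pow_add, div_pow]
  field_simp
  ring

end QPoissonWeight

theorem HasSum.sum_antidiagonal {α : Type*} [AddCommMonoid α] [TopologicalSpace α]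
    [ContinuousAdd α] [RegularSpace α] {f : ℕ × ℕ → α} {a : α} (hf : HasSum f a) :
    HasSum (fun n => ∑ p ∈ antidiagonal n, f p) a := by
  refine (HasAntidiagonal.sigmaAntidiagonalEquivProd.hasSum_iff.mpr hf).sigma fun n => ?_
  rw [← Finset.sum_coe_sort]
  exact hasSum_fintype _

/-- `(-b) ^ (k + j) * qAltCoeff q k j` is the `j`-th term of the `q`-exponential series in
`qPoissonWeight q k b`. -/
noncomputable def qAltCoeff (q : ℝ) (k j : ℕ) : ℝ :=
  (-1) ^ k * (q ^ (k * (k - 1) / 2 + k * j))⁻¹ / (qFactorial q k * qFactorial q j)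

section PartitionOfUnity

variable {q : ℝ}

lemma qNat_succ_mul_qAltCoeff_succ_left (hq : 1 < q) (k j : ℕ) :
    qNat q (k + 1) * qAltCoeff q (k + 1) j = -(q ^ (k + j))⁻¹ * qAltCoeff q k j := by
  have hexp :
      (k + 1) * (k + 1 - 1) / 2 + (k + 1) * j = (k * (k - 1) / 2 + k * j) + (k + j) := by
    rw [Nat.triangle_succ]; ring
  have := (qFactorial_pos hq k).ne'
  have := (qFactorial_pos hq j).ne'
  have := (qNat_pos hq k.succ_ne_zero).ne'
  have := (one_pos.trans hq).ne'
  rw [qAltCoeff, qAltCoeff, hexp, pow_add, qFactorial_succ, pow_succ]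
  field_simp
  ring

lemma pow_mul_qNat_succ_mul_qAltCoeff_succ_right (hq : 1 < q) (k j : ℕ) :
    q ^ k * qNat q (j + 1) * qAltCoeff q k (j + 1) = qAltCoeff q k j := by
  have := (qFactorial_pos hq k).ne'
  have := (qFactorial_pos hq j).ne'
  have := (qNat_pos hq j.succ_ne_zero).ne'
  have := (one_pos.trans hq).ne'
  rw [qAltCoeff, qAltCoeff, mul_add_one, ← add_assoc, pow_add, qFactorial_succ]
  field_simp

/-- Split `[k + j]_q = [k]_q + q^k [j]_q` on the antidiagonal `k + j = N + 1`; each half then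
shifts back to the antidiagonal `N`. -/
lemma qNat_succ_mul_sum_antidiagonal_qAltCoeff (hq : 1 < q) (N : ℕ) :
    qNat q (N + 1) * ∑ p ∈ antidiagonal (N + 1), qAltCoeff q p.1 p.2 =
      (1 - (q ^ N)⁻¹) * ∑ p ∈ antidiagonal N, qAltCoeff q p.1 p.2 := by
  have hsplit : qNat q (N + 1) * ∑ p ∈ antidiagonal (N + 1), qAltCoeff q p.1 p.2 =
      ∑ p ∈ antidiagonal (N + 1), qNat q p.1 * qAltCoeff q p.1 p.2 +
        ∑ p ∈ antidiagonal (N + 1), q ^ p.1 * qNat q p.2 * qAltCoeff q p.1 p.2 := by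
    rw [mul_sum, ← sum_add_distrib]
    refine sum_congr rfl fun p hp => ?_
    rw [← mem_antidiagonal.mp hp, qNat_add hq.ne']
    ring
  have hleft : ∑ p ∈ antidiagonal (N + 1), qNat q p.1 * qAltCoeff q p.1 p.2 =
      -(q ^ N)⁻¹ * ∑ p ∈ antidiagonal N, qAltCoeff q p.1 p.2 := by
    rw [Nat.sum_antidiagonal_succ, qNat_zero, zero_mul, zero_add, mul_sum]
    refine sum_congr rfl fun p hp => ?_
    rw [qNat_succ_mul_qAltCoeff_succ_left hq, mem_antidiagonal.mp hp]
  have hright : ∑ p ∈ antidiagonal (N + 1), q ^ p.1 * qNat q p.2 * qAltCoeff q p.1 p.2 =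
      ∑ p ∈ antidiagonal N, qAltCoeff q p.1 p.2 := by
    rw [Nat.sum_antidiagonal_succ', qNat_zero, mul_zero, zero_mul, zero_add]
    exact sum_congr rfl fun p _ => pow_mul_qNat_succ_mul_qAltCoeff_succ_right hq p.1 p.2
  rw [hsplit, hleft, hright]
  ring

lemma sum_antidiagonal_qAltCoeff (hq : 1 < q) (N : ℕ) :
    ∑ p ∈ antidiagonal N, qAltCoeff q p.1 p.2 = if N = 0 then 1 else 0 := by
  induction N with
  | zero => simp [qAltCoeff, qFactorial]
  | succ N ih =>
    have hrec := qNat_succ_mul_sum_antidiagonal_qAltCoeff hq N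
    have hfactor : (1 - (q ^ N)⁻¹) * ∑ p ∈ antidiagonal N, qAltCoeff q p.1 p.2 = 0 := by
      rcases N with _ | N <;> simp [ih]
    rw [hfactor] at hrec
    simpa using (mul_eq_zero.mp hrec).resolve_left (qNat_pos hq N.succ_ne_zero).ne'

lemma qPoissonWeight_coeff_mul_qExp_term (hq : 1 < q) (b : ℝ) (k j : ℕ) :
    (q ^ (k * (k - 1) / 2))⁻¹ * (b ^ k / qFactorial q k) *
        ((-b * q ^ (-(k : ℤ))) ^ j / qFactorial q j) =
      (-b) ^ (k + j) * qAltCoeff q k j := by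
  have := (qFactorial_pos hq k).ne'
  have := (qFactorial_pos hq j).ne'
  have := (one_pos.trans hq).ne'
  have hsign : ((-1 : ℝ) ^ k) * (-1) ^ k = 1 := by rw [← mul_pow, neg_one_mul, neg_neg, one_pow]
  rw [qAltCoeff, zpow_neg, zpow_natCast, mul_pow, inv_pow, ← pow_mul, pow_add q, pow_add (-b),
    neg_pow b k]
  field_simp
  rw [sq, hsign, mul_one]

lemma summable_neg_pow_mul_qAltCoeff (hq : 1 < q) (b : ℝ) :
    Summable fun p : ℕ × ℕ => (-b) ^ (p.1 + p.2) * qAltCoeff q p.1 p.2 := by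
  have hq₀ := one_pos.trans hq
  have hexp := summable_qExp_terms hq |b|
  have hexp₀ (k : ℕ) : 0 ≤ |b| ^ k / qFactorial q k :=
    div_nonneg (by positivity) (qFactorial_pos hq k).le
  refine .of_norm_bounded (hexp.mul_of_nonneg hexp hexp₀ hexp₀) fun ⟨k, j⟩ => ?_
  have hk := qFactorial_pos hq k
  have hj := qFactorial_pos hq j
  calc ‖(-b) ^ (k + j) * qAltCoeff q k j‖
      = |b| ^ k / qFactorial q k * (|b| ^ j / qFactorial q j) *
          (q ^ (k * (k - 1) / 2 + k * j))⁻¹ := by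
        simp only [Real.norm_eq_abs, qAltCoeff, abs_mul, abs_div, abs_pow, abs_neg, abs_one,
          one_pow, one_mul, abs_inv, abs_of_pos hq₀, abs_of_pos hk, abs_of_pos hj]
        ring
    _ ≤ |b| ^ k / qFactorial q k * (|b| ^ j / qFactorial q j) :=
        mul_le_of_le_one_right (mul_nonneg (hexp₀ k) (hexp₀ j))
          (inv_le_one_of_one_le₀ (one_le_pow₀ hq.le))

lemma hasSum_qPoissonWeight (hq : 1 < q) (b : ℝ) : HasSum (fun k => qPoissonWeight q k b) 1 := by
  obtain ⟨S, hS⟩ := summable_neg_pow_mul_qAltCoeff hq b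
  have hdiag :
      HasSum (fun N => ∑ p ∈ antidiagonal N, (-b) ^ (p.1 + p.2) * qAltCoeff q p.1 p.2) 1 := by
    convert hasSum_ite_eq 0 (1 : ℝ) using 2 with N
    rw [sum_congr rfl fun p hp => by rw [mem_antidiagonal.mp hp], ← mul_sum,
      sum_antidiagonal_qAltCoeff hq]
    split_ifs with h <;> simp [h]
  rw [hS.sum_antidiagonal.unique hdiag] at hS
  refine hS.prod_fiberwise fun k => ?_
  simp_rw [← qPoissonWeight_coeff_mul_qExp_term hq]
  exact (summable_qExp_terms hq _).hasSum.mul_left _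

end PartitionOfUnity

noncomputable def qPoissonMoment (q : ℝ) (m : ℕ) (b : ℝ) : ℝ :=
  ∑' k, qNat q k ^ m * qPoissonWeight q k b

section Moments

variable {q : ℝ}

lemma summable_qNat_pow_mul_qPoissonWeight (hq : 1 < q) (m : ℕ) (b : ℝ) :
    Summable fun k => qNat q k ^ m * qPoissonWeight q k b := by
  refine summable_mul_qPoissonWeight hq (C := (q - 1)⁻¹ ^ m) (c := q ^ m) (fun k => ?_) b
  rw [abs_of_nonneg (pow_nonneg (qNat_nonneg hq k) m), ← pow_mul, mul_comm m, pow_mul,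
    ← mul_pow, mul_comm, ← div_eq_mul_inv]
  exact pow_le_pow_left₀ (qNat_nonneg hq k) (qNat_le_pow_div hq k) m

lemma qPoissonMoment_zero (hq : 1 < q) (b : ℝ) : qPoissonMoment q 0 b = 1 := by
  simpa [qPoissonMoment] using (hasSum_qPoissonWeight hq b).tsum_eq

lemma qPoissonMoment_succ (hq : 1 < q) (m : ℕ) (b : ℝ) :
    qPoissonMoment q (m + 1) b =
      b * ∑ i ∈ range (m + 1), q ^ i * m.choose i * qPoissonMoment q i (b / q) := by
  have hterm (k : ℕ) : qNat q (k + 1) ^ (m + 1) * qPoissonWeight q (k + 1) b =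
      b * ∑ i ∈ range (m + 1),
        q ^ i * m.choose i * (qNat q k ^ i * qPoissonWeight q k (b / q)) := by
    rw [pow_succ, mul_assoc, qNat_succ_mul_qPoissonWeight_succ hq, qNat_succ hq.ne', add_comm,
      add_pow, sum_mul, mul_sum]
    refine sum_congr rfl fun i _ => ?_
    ring
  rw [qPoissonMoment, (summable_qNat_pow_mul_qPoissonWeight hq _ b).tsum_eq_zero_add, qNat_zero,
    zero_pow m.succ_ne_zero, zero_mul, zero_add, tsum_congr hterm, tsum_mul_left,
    Summable.tsum_finsetSum fun i _ =>
      (summable_qNat_pow_mul_qPoissonWeight hq i (b / q)).mul_left _]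
  simp only [tsum_mul_left, qPoissonMoment]

lemma qPoissonMoment_one (hq : 1 < q) (b : ℝ) : qPoissonMoment q 1 b = b := by
  simp [qPoissonMoment_succ hq, qPoissonMoment_zero hq]

lemma qPoissonMoment_two (hq : 1 < q) (b : ℝ) : qPoissonMoment q 2 b = b ^ 2 + b := by
  have := (one_pos.trans hq).ne'
  rw [qPoissonMoment_succ hq]
  simp only [sum_range_succ, sum_range_zero, qPoissonMoment_zero hq, qPoissonMoment_one hq]
  norm_num
  field_simp
  ring

lemma qPoissonMoment_three (hq : 1 < q) (b : ℝ) :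
    qPoissonMoment q 3 b = b ^ 3 + (2 + q) * b ^ 2 + b := by
  have := (one_pos.trans hq).ne'
  rw [qPoissonMoment_succ hq]
  simp only [sum_range_succ, sum_range_zero, qPoissonMoment_zero hq, qPoissonMoment_one hq,
    qPoissonMoment_two hq]
  norm_num
  field_simp
  ring

lemma qPoissonMoment_four (hq : 1 < q) (b : ℝ) :
    qPoissonMoment q 4 b =
      b ^ 4 + (3 + 2 * q + q ^ 2) * b ^ 3 + (3 + 3 * q + q ^ 2) * b ^ 2 + b := by
  have := (one_pos.trans hq).ne'
  rw [qPoissonMoment_succ hq]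
  simp only [sum_range_succ, sum_range_zero, qPoissonMoment_zero hq, qPoissonMoment_one hq,
    qPoissonMoment_two hq, qPoissonMoment_three hq]
  norm_num
  field_simp
  ring

end Moments

lemma qSzasz_pow (q : ℝ) (n m : ℕ) (x : ℝ) :
    qSzasz q n (fun t => t ^ m) x = qPoissonMoment q m (qNat q n * x) / qNat q n ^ m := by
  rw [qSzasz, qPoissonMoment, ← tsum_div_const]
  simp only [qSzaszBasis_eq_qPoissonWeight, div_pow, div_mul_eq_mul_div]

theorem qSzasz_moments_three_four_general (q : ℝ) (hq : 1 < q) (n : ℕ) (hn : 1 ≤ n)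
    (x : ℝ) :
    qSzasz q n (fun t => t ^ 3) x =
      x ^ 3 + (2 + q) * x ^ 2 / qNat q n + x / qNat q n ^ 2 ∧
    qSzasz q n (fun t => t ^ 4) x =
      x ^ 4 + (3 + 2 * q + q ^ 2) * x ^ 3 / qNat q n +
        (3 + 3 * q + q ^ 2) * x ^ 2 / qNat q n ^ 2 + x / qNat q n ^ 3 := by
  have := (qNat_pos hq (Nat.one_le_iff_ne_zero.mp hn)).ne'
  rw [qSzasz_pow, qSzasz_pow, qPoissonMoment_three hq, qPoissonMoment_four hq]
  constructor <;> field_simp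

/-- explicit formulas for the third and fourth moments. -/
theorem qSzasz_moments_three_four (q : ℝ) (hq : 1 < q) (n : ℕ) (hn : 1 ≤ n)
    (x : ℝ) (hx : 0 ≤ x) :
    qSzasz q n (fun t => t ^ 3) x =
      x ^ 3 + (2 + q) * x ^ 2 / qNat q n + x / qNat q n ^ 2 ∧
    qSzasz q n (fun t => t ^ 4) x =
      x ^ 4 + (3 + 2 * q + q ^ 2) * x ^ 3 / qNat q n +
        (3 + 3 * q + q ^ 2) * x ^ 2 / qNat q n ^ 2 + x / qNat q n ^ 3 :=
  qSzasz_moments_three_four_general q hq n hn x
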